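/- arXiv:math/0211281 — 2 statements merged into one kernel-verified Lean document; each statement's English description precedes it below -/
import Mathlib

section
/- A point (b,c,d) ∈ 𝕜³ lies in the affine plane {(b,c,d) : u²b + uc + d = -u³} if and only if u is a root of z³ + bz² + cz + d; moreover this plane equals the osculating plane of the curve κ(u) = (-3u, 3u², -u³) at κ(u). -/
/-! The plane is the affine span of `κ(u)`, `κ'(u) = (-3, 6u, -3u²)` and `κ''(u) = (0, 6, -6u)`:
every point of that span satisfies the linear equation by a polynomial identity, and conversely a
point of the plane is recovered from its first two coordinates, which fix the two parameters. -/

section OsculatingPlane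

variable {K : Type*}

theorem osculating_point_mem_plane [CommRing K] (u t s : K) :
    u ^ 2 * (-3 * u + t * -3 + s * 0) + u * (3 * u ^ 2 + t * (6 * u) + s * 6)
      + (-u ^ 3 + t * (-3 * u ^ 2) + s * (-6 * u)) = -u ^ 3 := by
  ring

theorem exists_osculating_params_of_mem_plane [Field K] [CharZero K] {u a b c : K}
    (h : u ^ 2 * a + u * b + c = -u ^ 3) :
    ∃ t s : K, a = -3 * u + t * -3 + s * 0 ∧ b = 3 * u ^ 2 + t * (6 * u) + s * 6 ∧
      c = -u ^ 3 + t * (-3 * u ^ 2) + s * (-6 * u) := by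
  refine ⟨-(a + 3 * u) / 3, (b + 2 * u * a + 3 * u ^ 2) / 6, by ring, by ring, ?_⟩
  field_simp
  linear_combination h

end OsculatingPlane

/-- `(b,c,d)` lies in the plane `u²b + uc + d = -u³` iff `u` is a root of `z³+bz²+cz+d`;
moreover this plane is the osculating plane of `κ(u) = (-3u, 3u², -u³)` at `κ(u)`. -/
theorem stmt_9 (K : Type*) [Field K] [CharZero K] (u : K) :
    (∀ b c d : K, u ^ 2 * b + u * c + d = -u ^ 3 ↔
      u ^ 3 + b * u ^ 2 + c * u + d = 0) ∧
    {p : K × K × K | u ^ 2 * p.1 + u * p.2.1 + p.2.2 = -u ^ 3}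
      = {p : K × K × K | ∃ t s : K,
          p = ((-3 * u, 3 * u ^ 2, -u ^ 3) : K × K × K)
            + t • ((-3, 6 * u, -3 * u ^ 2) : K × K × K)
            + s • ((0, 6, -6 * u) : K × K × K)} := by
  refine ⟨fun b c d => ⟨fun h => by linear_combination h, fun h => by linear_combination h⟩, ?_⟩
  ext ⟨a, b, c⟩
  simp only [Set.mem_ofPred_eq, Prod.smul_mk, smul_eq_mul, Prod.mk_add_mk, Prod.mk.injEq]
  refine ⟨exists_osculating_params_of_mem_plane, ?_⟩
  rintro ⟨t, s, rfl, rfl, rfl⟩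
  exact osculating_point_mem_plane u t s
end

section
/- Let P(z) be a monic polynomial of degree d over ℂ with distinct roots u₁,…,u_r of multiplicities μ₁,…,μ_r, and let P_t(z) = ∏ᵢ (z - uᵢ - aᵢ(t))^{μᵢ} be a differentiable deformation with aᵢ(0) = 0. Then every polynomial on the tangent line P + τ·(dP_t/dt)|_{t=0} is divisible by ∏ᵢ (z - uᵢ)^{μᵢ - 1}. -/
/-!
Differentiating `∏ᵢ (X - C (uᵢ + aᵢ t)) ^ μᵢ` coefficientwise by the product and power rules
gives `∑ᵢ μᵢ (X - C uᵢ) ^ (μᵢ - 1) · (-aᵢ'(0)) · ∏_{j ≠ i} (X - C uⱼ) ^ μⱼ` at `t = 0`, and each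
summand visibly contains every factor `(X - C uⱼ) ^ (μⱼ - 1)`. Since `P t` has degree `∑ μᵢ` for
all `t`, the derivative has degree at most `∑ μᵢ`, so the coefficient sum truncated there
recovers it exactly.
-/

open Polynomial Finset

section CoeffDeriv

variable {𝕜 : Type*} [NontriviallyNormedField 𝕜]

def HasCoeffDerivAt (f : 𝕜 → 𝕜[X]) (p : 𝕜[X]) (t : 𝕜) : Prop :=
  ∀ k, HasDerivAt (fun s => (f s).coeff k) (p.coeff k) t

namespace HasCoeffDerivAt

variable {f g : 𝕜 → 𝕜[X]} {p q : 𝕜[X]} {t : 𝕜}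

theorem const (c : 𝕜[X]) (t : 𝕜) : HasCoeffDerivAt (fun _ => c) 0 t :=
  fun k => by simpa using hasDerivAt_const t (c.coeff k)

theorem mul (hf : HasCoeffDerivAt f p t) (hg : HasCoeffDerivAt g q t) :
    HasCoeffDerivAt (fun s => f s * g s) (p * g t + f t * q) t := by
  intro k
  simp only [coeff_mul, coeff_add, ← sum_add_distrib]
  exact HasDerivAt.fun_sum fun x _ => (hf x.1).mul (hg x.2)

theorem finset_prod {ι : Type*} [DecidableEq ι] {s : Finset ι} {f : ι → 𝕜 → 𝕜[X]}
    {p : ι → 𝕜[X]} (h : ∀ i ∈ s, HasCoeffDerivAt (f i) (p i) t) :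
    HasCoeffDerivAt (fun x => ∏ i ∈ s, f i x) (∑ i ∈ s, p i * ∏ j ∈ s.erase i, f j t) t := by
  induction s using Finset.induction_on with
  | empty => simpa using const 1 t
  | @insert a s ha ih =>
    have hprod := (h a (mem_insert_self a s)).mul (ih fun i hi => h i (mem_insert_of_mem hi))
    simp only [prod_insert ha]
    convert hprod using 1
    rw [sum_insert ha, erase_insert ha, mul_sum]
    congr 1
    refine sum_congr rfl fun i hi => ?_
    rw [erase_insert_of_ne (ne_of_mem_of_not_mem hi ha).symm,
      prod_insert fun hai => ha (mem_of_mem_erase hai)]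
    ring

theorem pow (hf : HasCoeffDerivAt f p t) (n : ℕ) :
    HasCoeffDerivAt (fun s => f s ^ n) (n * f t ^ (n - 1) * p) t := by
  have h := finset_prod (s := range n) fun _ _ => hf
  simp only [prod_const, card_range] at h
  convert h using 1
  rw [sum_congr rfl fun i hi => by rw [card_erase_of_mem hi, card_range], sum_const, card_range,
    nsmul_eq_mul]
  ring

theorem natDegree_le (h : HasCoeffDerivAt f p t) {n : ℕ} (hf : ∀ s, (f s).natDegree ≤ n) :
    p.natDegree ≤ n := by
  refine natDegree_le_iff_coeff_eq_zero.2 fun k hk => (h k).unique ?_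
  have hzero : (fun s => (f s).coeff k) = fun _ => 0 :=
    funext fun s => coeff_eq_zero_of_natDegree_lt ((hf s).trans_lt hk)
  exact hzero ▸ hasDerivAt_const t 0

theorem sum_range_deriv_coeff (h : HasCoeffDerivAt f p t) {N : ℕ} (hN : p.natDegree < N) :
    ∑ k ∈ range N, C (deriv (fun s => (f s).coeff k) t) * X ^ k = p := by
  simp only [(h _).deriv, C_mul_X_pow_eq_monomial]
  exact (as_sum_range' p N hN).symm

end HasCoeffDerivAt

theorem hasCoeffDerivAt_X_sub_C {c : 𝕜 → 𝕜} {c' t : 𝕜} (hc : HasDerivAt c c' t) :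
    HasCoeffDerivAt (fun s => X - C (c s)) (-C c') t := by
  rintro (_ | _ | k)
  · simpa using hc.fun_neg
  · simpa using hasDerivAt_const t (1 : 𝕜)
  · simpa [coeff_X, coeff_C] using hasDerivAt_const t (0 : 𝕜)

end CoeffDeriv

theorem Polynomial.natDegree_prod_X_sub_C_pow {R ι : Type*} [CommRing R] [Nontrivial R]
    (s : Finset ι) (c : ι → R) (μ : ι → ℕ) :
    (∏ i ∈ s, (X - C (c i)) ^ μ i).natDegree = ∑ i ∈ s, μ i := by
  rw [natDegree_prod_of_monic _ _ fun i _ => (monic_X_sub_C (c i)).pow (μ i)]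
  simp [(monic_X_sub_C _).natDegree_pow]

theorem Finset.prod_pow_sub_one_dvd_sum_mul_prod_erase {R ι : Type*} [CommSemiring R]
    [DecidableEq ι] (s : Finset ι) (g q : ι → R) (μ : ι → ℕ)
    (hq : ∀ i ∈ s, g i ^ (μ i - 1) ∣ q i) :
    ∏ i ∈ s, g i ^ (μ i - 1) ∣ ∑ i ∈ s, q i * ∏ j ∈ s.erase i, g j ^ μ j :=
  dvd_sum fun i hi => by
    rw [← mul_prod_erase s _ hi]
    exact mul_dvd_mul (hq i hi) (prod_dvd_prod_of_dvd _ _ fun j _ => pow_dvd_pow _ (Nat.sub_le _ _))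

theorem stmt_16_general (r : ℕ) (u : Fin r → ℂ)
    (μ : Fin r → ℕ)
    (a : Fin r → ℂ → ℂ) (ha0 : ∀ i, a i 0 = 0)
    (hdiff : ∀ i, DifferentiableAt ℂ (a i) 0)
    (P : ℂ → Polynomial ℂ)
    (hP : ∀ t, P t = ∏ i, (X - C (u i + a i t)) ^ μ i)
    (τ : ℂ) :
    (∏ i, (X - C (u i)) ^ (μ i - 1)) ∣
      (P 0 + τ • ∑ k ∈ Finset.range ((∑ i, μ i) + 1),
        C (deriv (fun t => (P t).coeff k) 0) * X ^ k) := by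
  have hfactor (i : Fin r) :
      HasCoeffDerivAt (fun t => X - C (u i + a i t)) (-C (deriv (a i) 0)) 0 :=
    hasCoeffDerivAt_X_sub_C ((hdiff i).hasDerivAt.const_add (u i))
  have hPderiv := HasCoeffDerivAt.finset_prod fun i (_ : i ∈ univ) => (hfactor i).pow (μ i)
  rw [← funext hP] at hPderiv
  simp only [ha0, add_zero] at hPderiv
  have hdeg := hPderiv.natDegree_le fun t => (hP t ▸ natDegree_prod_X_sub_C_pow _ _ _).le
  rw [hPderiv.sum_range_deriv_coeff (Nat.lt_succ_of_le hdeg), hP 0]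
  simp only [ha0, add_zero]
  refine dvd_add (prod_dvd_prod_of_dvd _ _ fun i _ => pow_dvd_pow _ (Nat.sub_le _ _)) ?_
  rw [smul_eq_C_mul]
  refine dvd_mul_of_dvd_right (prod_pow_sub_one_dvd_sum_mul_prod_erase _ _ _ _
    fun i _ => (dvd_mul_left _ _).mul_right _) _

/-- Divisibility is tangency (direct direction): for a differentiable deformation
`P_t(z) = ∏ᵢ (z - uᵢ - aᵢ(t))^{μᵢ}` of `P(z) = ∏ᵢ (z - uᵢ)^{μᵢ}`, every polynomial on
the tangent line `P + τ·(dP_t/dt)|₀` is divisible by `∏ᵢ (z - uᵢ)^{μᵢ-1}`. -/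
theorem stmt_16 (r : ℕ) (u : Fin r → ℂ) (hu : Function.Injective u)
    (μ : Fin r → ℕ) (hμ : ∀ i, 1 ≤ μ i)
    (a : Fin r → ℂ → ℂ) (ha0 : ∀ i, a i 0 = 0)
    (hdiff : ∀ i, DifferentiableAt ℂ (a i) 0)
    (P : ℂ → Polynomial ℂ)
    (hP : ∀ t, P t = ∏ i, (X - C (u i + a i t)) ^ μ i)
    (τ : ℂ) :
    (∏ i, (X - C (u i)) ^ (μ i - 1)) ∣
      (P 0 + τ • ∑ k ∈ Finset.range ((∑ i, μ i) + 1),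
        C (deriv (fun t => (P t).coeff k) 0) * X ^ k) :=
  stmt_16_general r u μ a ha0 hdiff P hP τ
end
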